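/- Suppose V : [0,∞) × [-ℓ,ℓ] → ℝ is continuous, continuously differentiable in time on (0,∞), with V(s,·) ∈ C^∞([-ℓ,ℓ]) for each s ≥ 0, satisfying ∂_s V + 𝓛V = 0 on (0,∞) × (-ℓ,ℓ) and V(0,·) = 0. Then V(s,x) = 0 for all s ≥ 0 and x ∈ [-ℓ,ℓ]. -/

import Mathlib

open MeasureTheory Set

set_option linter.unusedVariables false

noncomputable def opL (U V : ℝ → ℝ) : ℝ → ℝ := fun x =>
  U x * iteratedDeriv 4 V x + 4 * deriv U x * iteratedDeriv 3 V x
    + (6 * iteratedDeriv 2 U x - (U x)^3) * iteratedDeriv 2 V x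
    + (4/5) * x * deriv V x + V x / 5

noncomputable def Phi (U : ℝ → ℝ) : ℝ → ℝ := fun x =>
  2 * (deriv U x)^2 - 4 * U x * iteratedDeriv 2 U x + (U x)^4

noncomputable def semSq (l : ℝ) (j : ℕ) (V : ℝ → ℝ) : ℝ :=
  ∫ x in (-l)..l, (l^2 - x^2)^(j+2) * (iteratedDeriv j V x)^2

noncomputable def normSq (l : ℝ) (k : ℕ) (V : ℝ → ℝ) : ℝ :=
  ∑ j ∈ Finset.range (k+1), semSq l j V

noncomputable def hnorm (l : ℝ) (k : ℕ) (V : ℝ → ℝ) : ℝ := Real.sqrt (normSq l k V)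

noncomputable def uSq (l : ℝ) (U V : ℝ → ℝ) : ℝ := ∫ x in (-l)..l, U x * (V x)^2

noncomputable def u2Sq (l : ℝ) (U V : ℝ → ℝ) : ℝ :=
  (1/5) * (∫ x in (-l)..l, U x * (V x)^2)
  + (∫ x in (-l)..l, Phi U x * (deriv V x)^2)
  + (∫ x in (-l)..l, (U x)^2 * (iteratedDeriv 2 V x)^2)

noncomputable def DZ (V f : ℝ → ℝ) : ℝ → ℝ := fun x => (1 + deriv V x)⁻¹ * deriv f x

noncomputable def Theta (U V : ℝ → ℝ) : ℝ → ℝ := fun x => U x * (1 + deriv V x)⁻¹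

noncomputable def Nnl (U V : ℝ → ℝ) : ℝ → ℝ := fun x =>
  opL U V x + DZ V (DZ V (DZ V (Theta U V))) x - (Theta U V x)^2 * DZ V (Theta U V) x
    - (x + V x) / 5

open scoped ContDiff


lemma cdDeriv {f : ℝ → ℝ} (hf : ContDiff ℝ ∞ f) : ContDiff ℝ ∞ (deriv f) :=
  (contDiff_infty_iff_deriv.mp hf).2

lemma hdAt {f : ℝ → ℝ} (hf : ContDiff ℝ ∞ f) (x : ℝ) : HasDerivAt f (deriv f x) x :=
  (hf.differentiable (by simp) x).hasDerivAt

noncomputable def pW0 (U v : ℝ → ℝ) : ℝ → ℝ := fun x => U x * v x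
noncomputable def pW1 (U v : ℝ → ℝ) : ℝ → ℝ := fun x =>
  deriv U x * v x + U x * deriv v x
noncomputable def pW2 (U v : ℝ → ℝ) : ℝ → ℝ := fun x =>
  deriv (deriv U) x * v x + 2 * deriv U x * deriv v x + U x * deriv (deriv v) x
noncomputable def pW3 (U v : ℝ → ℝ) : ℝ → ℝ := fun x =>
  deriv (deriv (deriv U)) x * v x + 3 * deriv (deriv U) x * deriv v x
    + 3 * deriv U x * deriv (deriv v) x + U x * deriv (deriv (deriv v)) x
noncomputable def pW4 (U v : ℝ → ℝ) : ℝ → ℝ := fun x =>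
  deriv (deriv (deriv (deriv U))) x * v x + 4 * deriv (deriv (deriv U)) x * deriv v x
    + 6 * deriv (deriv U) x * deriv (deriv v) x + 4 * deriv U x * deriv (deriv (deriv v)) x
    + U x * deriv (deriv (deriv (deriv v))) x
noncomputable def pB (U v : ℝ → ℝ) : ℝ → ℝ := fun x =>
  pW0 U v x * pW3 U v x - pW1 U v x * pW2 U v x - (U x)^2 * pW0 U v x * pW1 U v x
noncomputable def pb (U v : ℝ → ℝ) : ℝ → ℝ := fun x =>
  pW0 U v x * pW4 U v x - (pW2 U v x)^2 - 2 * U x * deriv U x * pW0 U v x * pW1 U v x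
    - (U x)^2 * (pW1 U v x)^2 - (U x)^2 * pW0 U v x * pW2 U v x

lemma hasDerivAt_pW0 {U v : ℝ → ℝ} (hU : ContDiff ℝ ∞ U) (hv : ContDiff ℝ ∞ v) (x : ℝ) :
    HasDerivAt (pW0 U v) (pW1 U v x) x :=
  (hdAt hU x).mul (hdAt hv x)

lemma hasDerivAt_pW1 {U v : ℝ → ℝ} (hU : ContDiff ℝ ∞ U) (hv : ContDiff ℝ ∞ v) (x : ℝ) :
    HasDerivAt (pW1 U v) (pW2 U v x) x := by
  have h := ((hdAt (cdDeriv hU) x).mul (hdAt hv x)).add ((hdAt hU x).mul (hdAt (cdDeriv hv) x))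
  refine h.congr_deriv ?_
  simp only [pW2]; ring

lemma hasDerivAt_pW2 {U v : ℝ → ℝ} (hU : ContDiff ℝ ∞ U) (hv : ContDiff ℝ ∞ v) (x : ℝ) :
    HasDerivAt (pW2 U v) (pW3 U v x) x := by
  have h := (((hdAt (cdDeriv (cdDeriv hU)) x).mul (hdAt hv x)).add
      (((hdAt (cdDeriv hU) x).const_mul 2).mul (hdAt (cdDeriv hv) x))).add
      ((hdAt hU x).mul (hdAt (cdDeriv (cdDeriv hv)) x))
  refine h.congr_deriv ?_
  simp only [pW3]; ring

lemma hasDerivAt_pW3 {U v : ℝ → ℝ} (hU : ContDiff ℝ ∞ U) (hv : ContDiff ℝ ∞ v) (x : ℝ) :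
    HasDerivAt (pW3 U v) (pW4 U v x) x := by
  have h := ((((hdAt (cdDeriv (cdDeriv (cdDeriv hU))) x).mul (hdAt hv x)).add
      (((hdAt (cdDeriv (cdDeriv hU)) x).const_mul 3).mul (hdAt (cdDeriv hv) x))).add
      (((hdAt (cdDeriv hU) x).const_mul 3).mul (hdAt (cdDeriv (cdDeriv hv)) x))).add
      ((hdAt hU x).mul (hdAt (cdDeriv (cdDeriv (cdDeriv hv))) x))
  refine h.congr_deriv ?_
  simp only [pW4]; ring

lemma hasDerivAt_pB {U v : ℝ → ℝ} (hU : ContDiff ℝ ∞ U) (hv : ContDiff ℝ ∞ v) (x : ℝ) :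
    HasDerivAt (pB U v) (pb U v x) x := by
  have h := (((hasDerivAt_pW0 hU hv x).mul (hasDerivAt_pW3 hU hv x)).sub
      ((hasDerivAt_pW1 hU hv x).mul (hasDerivAt_pW2 hU hv x))).sub
      ((((hdAt hU x).pow 2).mul (hasDerivAt_pW0 hU hv x)).mul (hasDerivAt_pW1 hU hv x))
  refine h.congr_deriv ?_
  simp only [pb, pW0, pW1, pW2, pW3, pW4, Pi.pow_apply, Pi.mul_apply]; ring

lemma itd1 (f : ℝ → ℝ) : iteratedDeriv 1 f = deriv f := iteratedDeriv_one
lemma itd2 (f : ℝ → ℝ) : iteratedDeriv 2 f = deriv (deriv f) := by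
  rw [show (2:ℕ) = 1 + 1 from rfl, iteratedDeriv_succ, iteratedDeriv_one]
lemma itd3 (f : ℝ → ℝ) : iteratedDeriv 3 f = deriv (deriv (deriv f)) := by
  rw [show (3:ℕ) = 2 + 1 from rfl, iteratedDeriv_succ, itd2]
lemma itd4 (f : ℝ → ℝ) : iteratedDeriv 4 f = deriv (deriv (deriv (deriv f))) := by
  rw [show (4:ℕ) = 3 + 1 from rfl, iteratedDeriv_succ, itd3]

lemma key_nonneg (l : ℝ) (hl : 0 < l) (U : ℝ → ℝ) (hU : ContDiff ℝ ∞ U)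
    (hUl : U l = 0) (hUml : U (-l) = 0) (hU'l : deriv U l = 0) (hU'ml : deriv U (-l) = 0)
    (hODE : ∀ x ∈ Set.Ioo (-l) l, iteratedDeriv 3 U x = (U x)^2 * deriv U x + x/5)
    (v : ℝ → ℝ) (hv : ContDiff ℝ ∞ v) :
    0 ≤ ∫ x in (-l)..l, U x * v x * opL U v x := by
  have hll : (-l) ≤ l := by linarith
  -- continuity facts
  have cU0 : Continuous U := hU.continuous
  have cU1 : Continuous (deriv U) := (cdDeriv hU).continuous
  have cU2 : Continuous (deriv (deriv U)) := (cdDeriv (cdDeriv hU)).continuous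
  have cU3 : Continuous (deriv (deriv (deriv U))) := (cdDeriv (cdDeriv (cdDeriv hU))).continuous
  have cU4 : Continuous (deriv (deriv (deriv (deriv U)))) :=
    (cdDeriv (cdDeriv (cdDeriv (cdDeriv hU)))).continuous
  have cv0 : Continuous v := hv.continuous
  have cv1 : Continuous (deriv v) := (cdDeriv hv).continuous
  have cv2 : Continuous (deriv (deriv v)) := (cdDeriv (cdDeriv hv)).continuous
  have cv3 : Continuous (deriv (deriv (deriv v))) := (cdDeriv (cdDeriv (cdDeriv hv))).continuous
  have cv4 : Continuous (deriv (deriv (deriv (deriv v)))) :=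
    (cdDeriv (cdDeriv (cdDeriv (cdDeriv hv)))).continuous
  have cW0 : Continuous (pW0 U v) := by unfold pW0; fun_prop
  have cW1 : Continuous (pW1 U v) := by unfold pW1; fun_prop
  have cW2 : Continuous (pW2 U v) := by unfold pW2; fun_prop
  have cW4 : Continuous (pW4 U v) := by unfold pW4; fun_prop
  have cpb : Continuous (pb U v) := by unfold pb; fun_prop
  -- the quadratic form
  have cQ : Continuous (fun x => (pW2 U v x)^2 + (U x)^2 * (pW1 U v x)^2) := by fun_prop
  -- ODE consequences
  have hu3 : ∀ x ∈ Set.Ioo (-l) l,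
      deriv (deriv (deriv U)) x = (U x)^2 * deriv U x + x/5 := by
    intro x hx; rw [← itd3]; exact hODE x hx
  have hu4 : ∀ x ∈ Set.Ioo (-l) l,
      deriv (deriv (deriv (deriv U))) x
        = 2 * U x * (deriv U x)^2 + (U x)^2 * deriv (deriv U) x + 1/5 := by
    intro x hx
    have heq : deriv (deriv (deriv U)) =ᶠ[nhds x] (fun y => (U y)^2 * deriv U y + y/5) :=
      Filter.eventuallyEq_of_mem (isOpen_Ioo.mem_nhds hx) (fun y hy => hu3 y hy)
    have hR : HasDerivAt (fun y => (U y)^2 * deriv U y + y/5)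
        (2 * U x * (deriv U x)^2 + (U x)^2 * deriv (deriv U) x + 1/5) x := by
      have h := (((hdAt hU x).pow 2).mul (hdAt (cdDeriv hU) x)).add
        ((hasDerivAt_id x).div_const 5)
      refine h.congr_deriv ?_; simp only [Pi.pow_apply]; ring
    rw [heq.deriv_eq]; exact hR.deriv
  -- pointwise identity on the open interval
  have hpt : ∀ x ∈ Set.Ioo (-l) l,
      U x * v x * opL U v x = pb U v x + ((pW2 U v x)^2 + (U x)^2 * (pW1 U v x)^2) := by
    intro x hx
    simp only [opL, itd4, itd3, itd2, pb, pW0, pW1, pW2, pW3, pW4]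
    rw [hu4 x hx, hu3 x hx]
    ring
  -- rewrite the integral
  have hcong : ∫ x in (-l)..l, U x * v x * opL U v x
      = ∫ x in (-l)..l, (pb U v x + ((pW2 U v x)^2 + (U x)^2 * (pW1 U v x)^2)) := by
    apply intervalIntegral.integral_congr_ae
    have h1 : ∀ᵐ (x : ℝ), x ≠ l := by
      rw [MeasureTheory.ae_iff]
      convert Real.volume_singleton (a := l) using 2
      ext y; simp
    filter_upwards [h1] with x hx hxI
    rw [Set.uIoc_of_le hll] at hxI
    exact hpt x ⟨hxI.1, lt_of_le_of_ne hxI.2 hx⟩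
  have hint_pb : IntervalIntegrable (pb U v) volume (-l) l := cpb.intervalIntegrable _ _
  have hint_Q : IntervalIntegrable (fun x => (pW2 U v x)^2 + (U x)^2 * (pW1 U v x)^2)
      volume (-l) l := cQ.intervalIntegrable _ _
  have hB : ∫ x in (-l)..l, pb U v x = pB U v l - pB U v (-l) :=
    intervalIntegral.integral_eq_sub_of_hasDerivAt (fun x _ => hasDerivAt_pB hU hv x) hint_pb
  have hBl : pB U v l = 0 := by simp [pB, pW0, pW1, hUl, hU'l]
  have hBml : pB U v (-l) = 0 := by simp [pB, pW0, pW1, hUml, hU'ml]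
  have hQnn : 0 ≤ ∫ x in (-l)..l, ((pW2 U v x)^2 + (U x)^2 * (pW1 U v x)^2) := by
    apply intervalIntegral.integral_nonneg hll
    intro x _; positivity
  rw [hcong, intervalIntegral.integral_add hint_pb hint_Q, hB, hBl, hBml]
  linarith

theorem stmt16 (l : ℝ) (hl : 0 < l) (U : ℝ → ℝ) (hU : ContDiff ℝ (⊤ : ℕ∞) U)
    (hUeven : ∀ x : ℝ, U (-x) = U x)
    (hUpos : ∀ x ∈ Set.Ioo (-l) l, 0 < U x)
    (hUl : U l = 0) (hUml : U (-l) = 0)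
    (hU'l : deriv U l = 0) (hU'ml : deriv U (-l) = 0)
    (hU''l : 0 < iteratedDeriv 2 U l) (hU''ml : 0 < iteratedDeriv 2 U (-l))
    (hODE : ∀ x ∈ Set.Ioo (-l) l, iteratedDeriv 3 U x = (U x)^2 * deriv U x + x/5)
    (V Vs : ℝ → ℝ → ℝ)
    (hVcont : ContinuousOn (fun p : ℝ × ℝ => V p.1 p.2) (Set.Ici (0:ℝ) ×ˢ Set.Icc (-l) l))
    (hVsm : ∀ s ∈ Set.Ici (0:ℝ), ContDiff ℝ (⊤ : ℕ∞) (V s))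
    (hVt : ∀ x ∈ Set.Icc (-l) l, ∀ s ∈ Set.Ioi (0:ℝ),
      HasDerivAt (fun t => V t x) (Vs s x) s)
    (hVtcont : ContinuousOn (fun p : ℝ × ℝ => Vs p.1 p.2) (Set.Ioi (0:ℝ) ×ˢ Set.Icc (-l) l))
    (hpde : ∀ s ∈ Set.Ioi (0:ℝ), ∀ x ∈ Set.Ioo (-l) l, Vs s x + opL U (V s) x = 0)
    (hinit : ∀ x ∈ Set.Icc (-l) l, V 0 x = 0) :
    ∀ s ∈ Set.Ici (0:ℝ), ∀ x ∈ Set.Icc (-l) l, V s x = 0 := by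
  have hll : (-l) ≤ l := by linarith
  have hll' : (-l) < l := by linarith
  have hU' : ContDiff ℝ ∞ U := hU.of_le (by simp)
  have hvs : ∀ s ∈ Set.Ici (0:ℝ), ContDiff ℝ ∞ (V s) := fun s hs => (hVsm s hs).of_le (by simp)
  have hUnn : ∀ x ∈ Set.Icc (-l) l, 0 ≤ U x := by
    intro x hx
    rcases eq_or_lt_of_le hx.1 with h | h
    · rw [← h, hUml]
    rcases eq_or_lt_of_le hx.2 with h2 | h2
    · rw [h2, hUl]
    · exact (hUpos x ⟨h, h2⟩).le
  set E : ℝ → ℝ := fun s => ∫ x in (-l)..l, U x * (V s x)^2 with hEdef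
  -- E 0 = 0
  have hE0 : E 0 = 0 := by
    show (∫ x in (-l)..l, U x * (V 0 x)^2) = 0
    rw [show (∫ x in (-l)..l, U x * (V 0 x)^2) = ∫ x in (-l)..l, (0:ℝ) from
      intervalIntegral.integral_congr (fun x hx => by
        rw [hinit x (by rwa [Set.uIcc_of_le hll] at hx)]; ring)]
    simp
  -- E nonneg
  have hEnn : ∀ s ∈ Set.Ici (0:ℝ), 0 ≤ E s := by
    intro s hs
    apply intervalIntegral.integral_nonneg hll
    intro x hx
    have := hUnn x hx
    positivity
  -- derivative of E
  have hEd : ∀ s₀ ∈ Set.Ioi (0:ℝ),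
      HasDerivAt E (∫ x in (-l)..l, U x * (2 * V s₀ x * Vs s₀ x)) s₀ := by
    intro s₀ hs₀
    have hs₀' : (0:ℝ) < s₀ := hs₀
    have hK : IsCompact ((Set.Icc (s₀/2) (s₀ + s₀/2)) ×ˢ (Set.Icc (-l) l)) :=
      isCompact_Icc.prod isCompact_Icc
    have hKsub : ((Set.Icc (s₀/2) (s₀ + s₀/2)) ×ˢ (Set.Icc (-l) l)) ⊆
        Set.Ioi (0:ℝ) ×ˢ Set.Icc (-l) l := by
      rintro ⟨a, b⟩ ⟨ha, hb⟩
      exact ⟨lt_of_lt_of_le (by linarith) ha.1, hb⟩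
    have hKsub' : ((Set.Icc (s₀/2) (s₀ + s₀/2)) ×ˢ (Set.Icc (-l) l)) ⊆
        Set.Ici (0:ℝ) ×ˢ Set.Icc (-l) l := by
      rintro ⟨a, b⟩ ⟨ha, hb⟩
      exact ⟨le_trans (by linarith) ha.1, hb⟩
    obtain ⟨C, hC⟩ := hK.exists_bound_of_continuousOn (hVtcont.mono hKsub)
    obtain ⟨C2, hC2⟩ := hK.exists_bound_of_continuousOn (hVcont.mono hKsub')
    obtain ⟨CU, hCU⟩ := isCompact_Icc.exists_bound_of_continuousOn
      (hU'.continuous.continuousOn (s := Set.Icc (-l) l))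
    have hmemK : (s₀, (0:ℝ)) ∈ (Set.Icc (s₀/2) (s₀ + s₀/2)) ×ˢ (Set.Icc (-l) l) :=
      Set.mk_mem_prod ⟨by linarith, by linarith⟩ ⟨by linarith, by linarith⟩
    have hC0 : 0 ≤ C := le_trans (norm_nonneg _) (hC _ hmemK)
    have hC20 : 0 ≤ C2 := le_trans (norm_nonneg _) (hC2 _ hmemK)
    have hCU0 : 0 ≤ CU := le_trans (norm_nonneg _) (hCU 0 ⟨by linarith, by linarith⟩)
    have hball : ∀ s ∈ Metric.ball s₀ (s₀/2), s ∈ Set.Icc (s₀/2) (s₀ + s₀/2) ∧ 0 < s := by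
      intro s hs
      rw [Metric.mem_ball, Real.dist_eq, abs_lt] at hs
      exact ⟨⟨by linarith, by linarith⟩, by linarith⟩
    have hIo : Set.uIoc (-l) l = Set.Ioc (-l) l := Set.uIoc_of_le hll
    have key := intervalIntegral.hasDerivAt_integral_of_dominated_loc_of_deriv_le
      (F := fun s t => U t * (V s t)^2) (F' := fun s t => U t * (2 * V s t * Vs s t))
      (x₀ := s₀) (a := -l) (b := l) (μ := volume)
      (bound := fun _ => CU * (2 * C2 * C)) (s := Metric.ball s₀ (s₀/2)) (Metric.ball_mem_nhds _ (by positivity))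
      ?_ ?_ ?_ ?_ ?_ ?_
    · exact key.2
    · -- hF_meas
      filter_upwards [eventually_gt_nhds hs₀'] with s hs
      exact (hU'.continuous.mul (((hvs s (le_of_lt hs)).continuous).pow 2)).aestronglyMeasurable
    · -- hF_int
      exact (hU'.continuous.mul (((hvs s₀ hs₀'.le).continuous).pow 2)).intervalIntegrable _ _
    · -- hF'_meas
      rw [hIo]
      apply ContinuousOn.aestronglyMeasurable _ measurableSet_Ioc
      apply ContinuousOn.mono _ Set.Ioc_subset_Icc_self
      have hVscont : ContinuousOn (fun t => Vs s₀ t) (Set.Icc (-l) l) := by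
        have : ContinuousOn ((fun p : ℝ × ℝ => Vs p.1 p.2) ∘ (fun t => (s₀, t)))
            (Set.Icc (-l) l) := by
          apply hVtcont.comp ((continuous_const.prodMk continuous_id).continuousOn)
          intro t ht; exact ⟨hs₀', ht⟩
        exact this
      have hV0cont : Continuous (V s₀) := (hvs s₀ hs₀'.le).continuous
      exact (hU'.continuous.continuousOn).mul
        (((continuous_const.mul hV0cont).continuousOn).mul hVscont)
    · -- h_bound
      apply Filter.Eventually.of_forall
      intro t htI s hs
      have ht : t ∈ Set.Icc (-l) l := Set.Ioc_subset_Icc_self (hIo ▸ htI)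
      obtain ⟨hsI, hspos⟩ := hball s hs
      have h1 : ‖U t‖ ≤ CU := hCU t ht
      have h2 : ‖V s t‖ ≤ C2 := hC2 (s, t) ⟨hsI, ht⟩
      have h3 : ‖Vs s t‖ ≤ C := hC (s, t) ⟨hsI, ht⟩
      show ‖U t * (2 * V s t * Vs s t)‖ ≤ CU * (2 * C2 * C)
      have e : ‖U t * (2 * V s t * Vs s t)‖ = ‖U t‖ * (2 * ‖V s t‖ * ‖Vs s t‖) := by
        simp only [norm_mul, Real.norm_ofNat]
      rw [e]
      have hnn1 : (0:ℝ) ≤ ‖U t‖ := norm_nonneg _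
      have hnn3 : (0:ℝ) ≤ ‖Vs s t‖ := norm_nonneg _
      have k1 : ‖V s t‖ * ‖Vs s t‖ ≤ C2 * C := mul_le_mul h2 h3 hnn3 hC20
      have k2 : ‖U t‖ * (‖V s t‖ * ‖Vs s t‖) ≤ CU * (C2 * C) :=
        mul_le_mul h1 k1 (by positivity) hCU0
      calc ‖U t‖ * (2 * ‖V s t‖ * ‖Vs s t‖)
          = 2 * (‖U t‖ * (‖V s t‖ * ‖Vs s t‖)) := by ring
        _ ≤ 2 * (CU * (C2 * C)) := by linarith
        _ = CU * (2 * C2 * C) := by ring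
    · exact intervalIntegrable_const
    · -- h_diff
      apply Filter.Eventually.of_forall
      intro t htI s hs
      have ht : t ∈ Set.Icc (-l) l := Set.Ioc_subset_Icc_self (hIo ▸ htI)
      obtain ⟨_, hspos⟩ := hball s hs
      have hd := hVt t ht s hspos
      have h := (hd.pow 2).const_mul (U t)
      refine h.congr_deriv ?_
      ring
  -- derivative is nonpositive
  have hEdnp : ∀ s₀ ∈ Set.Ioi (0:ℝ),
      (∫ x in (-l)..l, U x * (2 * V s₀ x * Vs s₀ x)) ≤ 0 := by
    intro s₀ hs₀
    have hv := hvs s₀ (Set.mem_Ici.mpr (le_of_lt hs₀))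
    have hcong : (∫ x in (-l)..l, U x * (2 * V s₀ x * Vs s₀ x))
        = ∫ x in (-l)..l, (-2 : ℝ) * (U x * V s₀ x * opL U (V s₀) x) := by
      apply intervalIntegral.integral_congr_ae
      have h1 : ∀ᵐ (x : ℝ), x ≠ l := by
        rw [MeasureTheory.ae_iff]
        convert Real.volume_singleton (a := l) using 2
        ext y; simp
      filter_upwards [h1] with x hx hxI
      rw [Set.uIoc_of_le hll] at hxI
      have hxIoo : x ∈ Set.Ioo (-l) l := ⟨hxI.1, lt_of_le_of_ne hxI.2 hx⟩
      have := hpde s₀ hs₀ x hxIoo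
      have hVsx : Vs s₀ x = - opL U (V s₀) x := by linarith
      rw [hVsx]; ring
    rw [hcong, intervalIntegral.integral_const_mul]
    have := key_nonneg l hl U hU' hUl hUml hU'l hU'ml hODE (V s₀) hv
    linarith
  -- continuity of E at 0 from the right
  have hEc0 : ContinuousWithinAt E (Set.Ici 0) 0 := by
    have hK : IsCompact ((Set.Icc (0:ℝ) 1) ×ˢ (Set.Icc (-l) l)) :=
      isCompact_Icc.prod isCompact_Icc
    have hKsub : ((Set.Icc (0:ℝ) 1) ×ˢ (Set.Icc (-l) l)) ⊆
        Set.Ici (0:ℝ) ×ˢ Set.Icc (-l) l := fun p hp => ⟨hp.1.1, hp.2⟩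
    obtain ⟨C2, hC2⟩ := hK.exists_bound_of_continuousOn (hVcont.mono hKsub)
    obtain ⟨CU, hCU⟩ := isCompact_Icc.exists_bound_of_continuousOn
      (hU'.continuous.continuousOn (s := Set.Icc (-l) l))
    have hIo : Set.uIoc (-l) l = Set.Ioc (-l) l := Set.uIoc_of_le hll
    have hev : ∀ᶠ s in nhdsWithin 0 (Set.Ici (0:ℝ)), s ∈ Set.Icc (0:ℝ) 1 := by
      have h1 : ∀ᶠ s in nhdsWithin 0 (Set.Ici (0:ℝ)), s < 1 :=
        eventually_nhdsWithin_of_eventually_nhds (eventually_lt_nhds zero_lt_one)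
      filter_upwards [h1, self_mem_nhdsWithin] with s h1' h2'
      exact ⟨h2', h1'.le⟩
    apply intervalIntegral.continuousWithinAt_of_dominated_interval
      (bound := fun _ => CU * C2^2)
    · filter_upwards [hev] with s hs
      exact (hU'.continuous.mul (((hvs s hs.1).continuous).pow 2)).aestronglyMeasurable
    · filter_upwards [hev] with s hs
      apply Filter.Eventually.of_forall
      intro t htI
      have ht : t ∈ Set.Icc (-l) l := Set.Ioc_subset_Icc_self (hIo ▸ htI)
      have h1 : ‖U t‖ ≤ CU := hCU t ht
      have h2 : ‖V s t‖ ≤ C2 := hC2 (s, t) ⟨hs, ht⟩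
      have h20 : (0:ℝ) ≤ ‖V s t‖ := norm_nonneg _
      calc ‖U t * (V s t)^2‖ = ‖U t‖ * ‖V s t‖^2 := by
            simp [Real.norm_eq_abs, abs_mul, abs_pow, sq_abs]
        _ ≤ CU * C2^2 := by
            have h10 : (0:ℝ) ≤ ‖U t‖ := norm_nonneg _
            have h21 : ‖V s t‖^2 ≤ C2^2 := by nlinarith
            nlinarith
    · exact intervalIntegrable_const
    · apply Filter.Eventually.of_forall
      intro t htI
      have ht : t ∈ Set.Icc (-l) l := Set.Ioc_subset_Icc_self (hIo ▸ htI)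
      have hVt0 : ContinuousWithinAt (fun s => V s t) (Set.Ici 0) 0 := by
        have hf2c : Continuous (fun s : ℝ => (s, t)) := continuous_id.prodMk continuous_const
        have hmap : Set.MapsTo (fun s : ℝ => (s, t)) (Set.Ici (0:ℝ))
            (Set.Ici (0:ℝ) ×ˢ Set.Icc (-l) l) := fun s hs => Set.mk_mem_prod hs ht
        have h : ContinuousWithinAt ((fun p : ℝ × ℝ => V p.1 p.2) ∘ (fun s : ℝ => (s, t)))
            (Set.Ici (0:ℝ)) 0 :=
          ContinuousWithinAt.comp
            (hVcont (0, t) (Set.mk_mem_prod Set.self_mem_Ici ht))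
            hf2c.continuousWithinAt hmap
        exact h
      exact (continuousWithinAt_const.mul (hVt0.pow 2))
  -- E vanishes
  have hEzero : ∀ s ∈ Set.Ici (0:ℝ), E s = 0 := by
    intro s hs
    rcases eq_or_lt_of_le (Set.mem_Ici.mp hs) with h | h
    · rw [← h]; exact hE0
    have hanti : AntitoneOn E (Set.Icc 0 s) := by
      apply antitoneOn_of_deriv_nonpos (convex_Icc 0 s)
      · intro t ht
        rcases eq_or_lt_of_le ht.1 with h' | h'
        · rw [← h']
          exact hEc0.mono (fun y hy => hy.1)
        · exact ((hEd t h').continuousAt).continuousWithinAt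
      · rw [interior_Icc]
        intro t ht
        exact (hEd t ht.1).differentiableAt.differentiableWithinAt
      · rw [interior_Icc]
        intro t ht
        rw [(hEd t ht.1).deriv]
        exact hEdnp t ht.1
    have h1 : E s ≤ E 0 := hanti (Set.left_mem_Icc.mpr h.le) (Set.right_mem_Icc.mpr h.le) h.le
    have h2 := hEnn s hs
    rw [hE0] at h1
    linarith
  -- conclude pointwise vanishing
  intro s hs x hx
  have hVc : Continuous (V s) := (hvs s hs).continuous
  have hf : Continuous (fun x => U x * (V s x)^2) := hU'.continuous.mul (hVc.pow 2)
  have hIoo : ∀ y ∈ Set.Ioo (-l) l, V s y = 0 := by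
    intro y hy
    by_contra hne
    have hfy : 0 < U y * (V s y)^2 := by
      have h1 := hUpos y hy
      have h2 : (V s y)^2 > 0 := by positivity
      positivity
    -- integral over Ioc is zero
    have hint0 : (∫ x in (-l)..l, U x * (V s x)^2) = 0 := hEzero s hs
    have hint : ∫ t in Set.Ioc (-l) l, (U t * (V s t)^2) = 0 := by
      rw [← intervalIntegral.integral_of_le hll]
      exact hint0
    have hnn : 0 ≤ᵐ[volume.restrict (Set.Ioc (-l) l)] (fun t => U t * (V s t)^2) := by
      filter_upwards [MeasureTheory.ae_restrict_mem measurableSet_Ioc] with t ht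
      have := hUnn t (Set.Ioc_subset_Icc_self ht)
      positivity
    have hInt : MeasureTheory.IntegrableOn (fun t => U t * (V s t)^2)
        (Set.Ioc (-l) l) volume :=
      (hf.integrableOn_Icc (μ := volume)).mono_set Set.Ioc_subset_Icc_self
    have hae : (fun t => U t * (V s t)^2) =ᵐ[volume.restrict (Set.Ioc (-l) l)] 0 :=
      (MeasureTheory.integral_eq_zero_iff_of_nonneg_ae hnn hInt).mp hint
    have hnullr : (volume.restrict (Set.Ioc (-l) l)) {t | U t * (V s t)^2 ≠ 0} = 0 := by
      rw [Filter.EventuallyEq] at hae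
      rw [MeasureTheory.ae_iff] at hae
      convert hae using 2
      try (ext t; simp)
    have hmN : MeasurableSet {t : ℝ | U t * (V s t)^2 ≠ 0} := by
      have : {t : ℝ | U t * (V s t)^2 ≠ 0} = (fun t => U t * (V s t)^2) ⁻¹' ({0}ᶜ) := rfl
      rw [this]
      exact (hf.measurable) (measurableSet_singleton 0).compl
    have hnull : volume ({t | U t * (V s t)^2 ≠ 0} ∩ Set.Ioc (-l) l) = 0 := by
      rwa [Measure.restrict_apply hmN] at hnullr
    set O := Set.Ioo (-l) l ∩ (fun t => U t * (V s t)^2) ⁻¹' (Set.Ioi 0) with hO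
    have hOopen : IsOpen O := isOpen_Ioo.inter (isOpen_Ioi.preimage hf)
    have hyO : y ∈ O := ⟨hy, hfy⟩
    have hOsub : O ⊆ {t | U t * (V s t)^2 ≠ 0} ∩ Set.Ioc (-l) l := by
      rintro t ⟨ht1, ht2⟩
      exact ⟨ne_of_gt ht2, Set.Ioo_subset_Ioc_self ht1⟩
    have hpos : 0 < volume O := hOopen.measure_pos volume ⟨y, hyO⟩
    have : volume O = 0 := le_antisymm (hnull ▸ measure_mono hOsub) (zero_le)
    rw [this] at hpos
    exact lt_irrefl 0 hpos
  -- extend to the closed interval by continuity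
  have hclos : Set.EqOn (V s) 0 (Set.Icc (-l) l) := by
    have h1 : Set.EqOn (V s) 0 (Set.Ioo (-l) l) := fun y hy => hIoo y hy
    have h2 := h1.closure hVc continuous_const
    rw [closure_Ioo (ne_of_lt hll')] at h2
    exact h2
  exact hclos hx
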